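/- In a locally d⁻-finite digraph, if two regions (sets of the form Inf^∞{x}) have a nonempty intersection, then one of them contains the other. -/
import Mathlib


/-- Inflation of a vertex set in a digraph with arc relation `E`. -/
def dInfl {V : Type*} (E : V → V → Prop) (U : Set V) : Set V :=
  U ∪ {v | (∃ u, E u v) ∧ ∀ u, E u v → u ∈ U}

/-- Hyperinflation: union of all iterates of the inflation. -/
def dInflStar {V : Type*} (E : V → V → Prop) (U : Set V) : Set V :=
  ⋃ n : ℕ, (dInfl E)^[n] U

lemma dInfl_mono {V : Type*} (E : V → V → Prop) {U W : Set V} (h : U ⊆ W) :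
    dInfl E U ⊆ dInfl E W := by
  intro v hv
  rcases hv with hv | ⟨h1, h2⟩
  · exact Or.inl (h hv)
  · exact Or.inr ⟨h1, fun u hu => h (h2 u hu)⟩

lemma dInfl_iter_mono {V : Type*} (E : V → V → Prop) {U W : Set V} (h : U ⊆ W) (m : ℕ) :
    (dInfl E)^[m] U ⊆ (dInfl E)^[m] W := by
  induction m with
  | zero => exact h
  | succ m ih =>
    rw [Function.iterate_succ_apply', Function.iterate_succ_apply']
    exact dInfl_mono E ih

lemma star_subset {V : Type*} (E : V → V → Prop) {x y : V}
    (h : x ∈ dInflStar E {y}) : dInflStar E {x} ⊆ dInflStar E {y} := by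
  obtain ⟨_, ⟨N, rfl⟩, hN⟩ := h
  intro v hv
  obtain ⟨_, ⟨m, rfl⟩, hm⟩ := hv
  refine Set.mem_iUnion.2 ⟨m + N, ?_⟩
  rw [Function.iterate_add_apply]
  exact dInfl_iter_mono E (Set.singleton_subset_iff.2 hN) m hm

lemma key {V : Type*} (E : V → V → Prop) (x y : V) :
    ∀ k m n (w : V), m + n ≤ k → w ∈ (dInfl E)^[m] {x} → w ∈ (dInfl E)^[n] {y} →
      x ∈ dInflStar E {y} ∨ y ∈ dInflStar E {x} := by
  intro k
  induction k with
  | zero =>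
    intro m n w hk hx hy
    obtain ⟨rfl, rfl⟩ : m = 0 ∧ n = 0 := by omega
    simp only [Function.iterate_zero, id_eq, Set.mem_singleton_iff] at hx hy
    subst hx
    exact Or.inl (Set.mem_iUnion.2 ⟨0, hy ▸ rfl⟩)
  | succ k ih =>
    intro m n w hk hx hy
    match m, n with
    | 0, n =>
      simp only [Function.iterate_zero, id_eq, Set.mem_singleton_iff] at hx
      subst hx
      exact Or.inl (Set.mem_iUnion.2 ⟨n, hy⟩)
    | m, 0 =>
      simp only [Function.iterate_zero, id_eq, Set.mem_singleton_iff] at hy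
      subst hy
      exact Or.inr (Set.mem_iUnion.2 ⟨m, hx⟩)
    | m + 1, n + 1 =>
      rw [Function.iterate_succ_apply'] at hx hy
      rcases hx with hx | ⟨⟨u, hu⟩, hx2⟩
      · exact ih m (n + 1) w (by omega) hx (by rw [Function.iterate_succ_apply']; exact hy)
      rcases hy with hy | ⟨_, hy2⟩
      · exact ih (m + 1) n w (by omega) (by rw [Function.iterate_succ_apply']; exact Or.inr ⟨⟨u, hu⟩, hx2⟩) hy
      · exact ih m n u (by omega) (hx2 u hu) (hy2 u hu)

theorem stmt_9 {V : Type*} (E : V → V → Prop)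
    (hfin : ∀ v : V, {u | E u v}.Finite) (x y : V)
    (hne : (dInflStar E {x} ∩ dInflStar E {y}).Nonempty) :
    dInflStar E {x} ⊆ dInflStar E {y} ∨ dInflStar E {y} ⊆ dInflStar E {x} := by
  obtain ⟨w, hwx, hwy⟩ := hne
  obtain ⟨_, ⟨m, rfl⟩, hm⟩ := hwx
  obtain ⟨_, ⟨n, rfl⟩, hn⟩ := hwy
  rcases key E x y (m + n) m n w le_rfl hm hn with h | h
  · exact Or.inl (star_subset E h)
  · exact Or.inr (star_subset E h)
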